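/- arXiv:2604.21831 — 3 statements merged into one kernel-verified Lean document; each statement's English description precedes it below -/
import Mathlib

section
/- Let A be a finite algebra and α a congruence of A. Then every language in nuP_{A/α} is also in nuP_A; that is, polynomial-size circuit families over the quotient algebra A/α recognize a subclass of the languages recognized over A. -/
/-- A (finitary) signature: a set of operation symbols with arities. -/
structure Sig where
  ops : Type
  arity : ops → ℕ

/-- An algebra for a signature: a carrier set with an interpretation of each symbol. -/
structure AlgStr (S : Sig) where
  carrier : Type
  interp : (o : S.ops) → (Fin (S.arity o) → carrier) → carrier

/-- One instruction of a straight-line circuit over an algebra with carrier `A`: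
an input variable, a constant from `A`, or a gate applying a basic operation
to values of earlier instructions (referenced by their position). -/
inductive Instr (S : Sig) (A : Type) (n : ℕ) : Type
  | input : Fin n → Instr S A n
  | const : A → Instr S A n
  | gate : (o : S.ops) → (Fin (S.arity o) → ℕ) → Instr S A n

/-- A circuit over a signature with carrier `A` and `n` inputs: a straight-line program. -/
abbrev Circ (S : Sig) (A : Type) (n : ℕ) := List (Instr S A n)

/-- Value of a single instruction, given the input tuple `x`, a default value `dflt`
(used for out-of-range references) and the list `v` of previously computed values. -/
def evalInstr {S : Sig} (A : AlgStr S) {n : ℕ} (x : Fin n → A.carrier)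
    (dflt : A.carrier) (v : List A.carrier) : Instr S A.carrier n → A.carrier
  | .input i => x i
  | .const a => a
  | .gate o args => A.interp o (fun j => v.getD (args j) dflt)

/-- Evaluate a circuit on an input tuple; the output is the value of the last gate. -/
def evalCirc {S : Sig} (A : AlgStr S) {n : ℕ} (dflt : A.carrier)
    (c : Circ S A.carrier n) (x : Fin n → A.carrier) : A.carrier :=
  (c.foldl (fun v i => v ++ [evalInstr A x dflt v i]) []).getLastD dflt

/-- `f` is bounded by a polynomial. -/
def PolyBounded (f : ℕ → ℕ) : Prop := ∃ c : ℕ, ∀ n, f n ≤ c * n ^ c + c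

/-- The class of languages over `{0,1}` recognized by a polynomial-size family of
circuits over the algebra `A`, together with an encoding `ι : {0,1} → A` and an
accepting set `Acc ⊆ A`. -/
def nuP {S : Sig} (A : AlgStr S) : Set (Set (List Bool)) :=
  {L | ∃ (t : (n : ℕ) → Circ S A.carrier n) (ι : Bool → A.carrier)
        (Acc : Set A.carrier) (dflt : A.carrier),
      PolyBounded (fun n => (t n).length) ∧
      ∀ w : List Bool, w ∈ L ↔
        evalCirc A dflt (t w.length) (fun i => ι (w.get i)) ∈ Acc}

/-- The quotient algebra of `A` by a congruence (an equivalence relation compatible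
with all basic operations). -/
noncomputable def quotAlg {S : Sig} (A : AlgStr S) (r : Setoid A.carrier)
    (_hr : ∀ (o : S.ops) (x y : Fin (S.arity o) → A.carrier),
      (∀ i, r.r (x i) (y i)) → r.r (A.interp o x) (A.interp o y)) : AlgStr S where
  carrier := Quotient r
  interp := fun o x => Quotient.mk r (A.interp o (fun i => Quotient.out (x i)))

/-!
A surjective homomorphism `φ : A → B` lets every circuit over `B` be simulated over `A`:
keep the inputs and gates, replace each constant `b` by a preimage of `b`, and encode inputs
and the default value through preimages as well. Since `φ` commutes with every gate, it maps
the value of the simulating circuit to the value of the original one, so a word is accepted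
over `B` iff the simulating circuit lands in the preimage of the accepting set. The quotient
map `A → A/α` is such a homomorphism.
-/

namespace AlgStr

variable {S : Sig}

def IsHom {A B : AlgStr S} (φ : A.carrier → B.carrier) : Prop :=
  ∀ (o : S.ops) (x : Fin (S.arity o) → A.carrier), φ (A.interp o x) = B.interp o (φ ∘ x)

theorem isHom_quotient_mk (A : AlgStr S) (r : Setoid A.carrier)
    (hr : ∀ (o : S.ops) (x y : Fin (S.arity o) → A.carrier),
      (∀ i, r.r (x i) (y i)) → r.r (A.interp o x) (A.interp o y)) :
    IsHom (B := quotAlg A r hr) (Quotient.mk r) := fun o x =>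
  Quotient.sound <| hr o _ _ fun i => Setoid.symm (Quotient.mk_out (x i))

end AlgStr

namespace Instr

variable {S : Sig} {A B : Type} {n : ℕ}

def mapConst (g : B → A) : Instr S B n → Instr S A n
  | .input i => .input i
  | .const b => .const (g b)
  | .gate o args => .gate o args

end Instr

section Simulation

open AlgStr

variable {S : Sig} {A B : AlgStr S} {φ : A.carrier → B.carrier} {g : B.carrier → A.carrier}
  {n : ℕ}

theorem evalInstr_mapConst (hφ : IsHom φ) (hg : Function.RightInverse g φ)
    (x : Fin n → A.carrier) (d : A.carrier) (v : List A.carrier) (ins : Instr S B.carrier n) :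
    evalInstr B (φ ∘ x) (φ d) (v.map φ) ins = φ (evalInstr A x d v (ins.mapConst g)) := by
  cases ins with
  | input i => rfl
  | const b => exact (hg b).symm
  | gate o args =>
    simp only [evalInstr, Instr.mapConst]
    rw [hφ]
    exact congrArg (B.interp o) (funext fun j => List.getD_map v d φ)

theorem foldl_evalInstr_mapConst (hφ : IsHom φ) (hg : Function.RightInverse g φ)
    (x : Fin n → A.carrier) (d : A.carrier) (c : Circ S B.carrier n) (v : List A.carrier) :
    c.foldl (fun w i => w ++ [evalInstr B (φ ∘ x) (φ d) w i]) (v.map φ)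
      = ((c.map (Instr.mapConst g)).foldl
          (fun w i => w ++ [evalInstr A x d w i]) v).map φ := by
  induction c generalizing v with
  | nil => rfl
  | cons ins c ih =>
    simp only [List.map_cons, List.foldl_cons, evalInstr_mapConst hφ hg]
    rw [← ih, List.map_append, List.map_singleton]

theorem evalCirc_mapConst (hφ : IsHom φ) (hg : Function.RightInverse g φ)
    (d : A.carrier) (c : Circ S B.carrier n) (x : Fin n → A.carrier) :
    evalCirc B (φ d) c (φ ∘ x) = φ (evalCirc A d (c.map (Instr.mapConst g)) x) := by
  rw [evalCirc, evalCirc, ← List.getLastD_map (f := φ), ← foldl_evalInstr_mapConst hφ hg]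
  rfl

theorem nuP_subset_of_surjective (hφ : IsHom φ)
    (hsurj : Function.Surjective φ) : nuP B ⊆ nuP A := by
  rintro L ⟨t, ι, Acc, d, ⟨c, hc⟩, hL⟩
  obtain ⟨g, hg⟩ := hsurj.hasRightInverse
  refine ⟨fun n => (t n).map (Instr.mapConst g), g ∘ ι, φ ⁻¹' Acc, g d,
    ⟨c, fun n => (List.length_map _).trans_le (hc n)⟩, fun w => ?_⟩
  rw [hL w, Set.mem_preimage, ← evalCirc_mapConst hφ hg, hg]
  simp only [Function.comp_def, hg _]

end Simulation

theorem nuP_quotient_subset_general {S : Sig} (A : AlgStr S)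
    (r : Setoid A.carrier)
    (hr : ∀ (o : S.ops) (x y : Fin (S.arity o) → A.carrier),
      (∀ i, r.r (x i) (y i)) → r.r (A.interp o x) (A.interp o y)) :
    nuP (quotAlg A r hr) ⊆ nuP A :=
  nuP_subset_of_surjective (AlgStr.isHom_quotient_mk A r hr) Quotient.mk_surjective

/-- `nuP_{A/α} ⊆ nuP_A` for any congruence `α` of a finite algebra `A`. -/
theorem nuP_quotient_subset {S : Sig} [Finite S.ops] (A : AlgStr S) [Finite A.carrier]
    (r : Setoid A.carrier)
    (hr : ∀ (o : S.ops) (x y : Fin (S.arity o) → A.carrier),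
      (∀ i, r.r (x i) (y i)) → r.r (A.interp o x) (A.interp o y)) :
    nuP (quotAlg A r hr) ⊆ nuP A :=
  nuP_quotient_subset_general A r hr
end

section
/- Let A and B be finite algebras. If L is a language in nuP_{A×B}, then there exist finitely many languages L_1^A,...,L_k^A ∈ nuP_A and L_1^B,...,L_k^B ∈ nuP_B such that L = ⋃_{i=1}^k (L_i^A ∩ L_i^B). -/
/-- The direct product of two algebras over the same signature, with coordinatewise operations. -/
def prodAlg {S : Sig} (A B : AlgStr S) : AlgStr S where
  carrier := A.carrier × B.carrier
  interp := fun o x => (A.interp o (fun i => (x i).1), B.interp o (fun i => (x i).2))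

/- Circuit evaluation commutes with algebra homomorphisms, so the two coordinates of a circuit
over `A × B` are computed by its projections to `A` and to `B`. Since the accepting set is finite,
the language is the finite union over its points `(a, b)` of
`{w | first coordinate is a} ∩ {w | second coordinate is b}`. -/

def Instr.mapConst_s2 {S : Sig} {A A' : Type} {n : ℕ} (f : A → A') : Instr S A n → Instr S A' n
  | .input i => .input i
  | .const a => .const (f a)
  | .gate o args => .gate o args

def AlgStr.IsHom_s2 {S : Sig} (A B : AlgStr S) (f : A.carrier → B.carrier) : Prop :=
  ∀ o x, f (A.interp o x) = B.interp o (f ∘ x)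

lemma List.foldl_append_singleton_map {I J α β : Type*} (g : I → J) (p : α → β)
    (F : List α → I → α) (G : List β → J → β) (h : ∀ v i, G (v.map p) (g i) = p (F v i))
    (c : List I) :
    (c.map g).foldl (fun v i => v ++ [G v i]) [] = (c.foldl (fun v i => v ++ [F v i]) []).map p := by
  induction c using List.reverseRecOn with
  | nil => rfl
  | append_singleton c i ih => simp [List.foldl_append, ih, h]

lemma evalCirc_mapConst_of_isHom {S : Sig} {A B : AlgStr S} {f : A.carrier → B.carrier}
    (hf : A.IsHom_s2 B f) {n : ℕ} (dflt : A.carrier) (c : Circ S A.carrier n)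
    (x : Fin n → A.carrier) :
    evalCirc B (f dflt) (c.map (Instr.mapConst_s2 f)) (f ∘ x) = f (evalCirc A dflt c x) := by
  have hvalues := List.foldl_append_singleton_map (Instr.mapConst_s2 f) f
    (evalInstr A x dflt) (evalInstr B (f ∘ x) (f dflt))
    (fun v i => by
      cases i with
      | input j => rfl
      | const a => rfl
      | gate o args =>
        simp only [evalInstr, Instr.mapConst_s2, List.getD_map]
        exact (hf o _).symm)
    c
  rw [evalCirc, hvalues, List.getLastD_map, evalCirc]

lemma nuP_of_isHom {S : Sig} {A B : AlgStr S} {f : A.carrier → B.carrier} (hf : A.IsHom_s2 B f)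
    {t : (n : ℕ) → Circ S A.carrier n} (ht : PolyBounded fun n => (t n).length)
    (ι : Bool → A.carrier) (dflt : A.carrier) (Acc : Set B.carrier) :
    {w : List Bool | f (evalCirc A dflt (t w.length) (fun i => ι (w.get i))) ∈ Acc} ∈ nuP B := by
  refine ⟨fun n => (t n).map (Instr.mapConst_s2 f), f ∘ ι, Acc, f dflt, ?_, fun w => ?_⟩
  · simpa only [List.length_map] using ht
  · exact iff_of_eq (congrArg (· ∈ Acc)
      (evalCirc_mapConst_of_isHom hf dflt (t w.length) (fun i => ι (w.get i)))).symm

lemma prodAlg_isHom_fst {S : Sig} (A B : AlgStr S) : (prodAlg A B).IsHom_s2 A Prod.fst :=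
  fun _ _ => rfl

lemma prodAlg_isHom_snd {S : Sig} (A B : AlgStr S) : (prodAlg A B).IsHom_s2 B Prod.snd :=
  fun _ _ => rfl

theorem nuP_prod_decomposition_general {S : Sig} (A B : AlgStr S)
    [Finite A.carrier] [Finite B.carrier]
    (L : Set (List Bool)) (hL : L ∈ nuP (prodAlg A B)) :
    ∃ (k : ℕ) (LA : Fin k → Set (List Bool)) (LB : Fin k → Set (List Bool)),
      (∀ i, LA i ∈ nuP A) ∧ (∀ i, LB i ∈ nuP B) ∧
      L = ⋃ i, LA i ∩ LB i := by
  obtain ⟨t, ι, Acc, dflt, ht, hL⟩ := hL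
  have : Finite (prodAlg A B).carrier := inferInstanceAs (Finite (A.carrier × B.carrier))
  obtain ⟨k, ⟨e⟩⟩ := Finite.exists_equiv_fin Acc
  let value (w : List Bool) := evalCirc (prodAlg A B) dflt (t w.length) (fun i => ι (w.get i))
  refine ⟨k, fun i => {w | (value w).1 ∈ {(e.symm i).1.1}},
    fun i => {w | (value w).2 ∈ {(e.symm i).1.2}},
    fun i => nuP_of_isHom (prodAlg_isHom_fst A B) ht ι dflt _,
    fun i => nuP_of_isHom (prodAlg_isHom_snd A B) ht ι dflt _, ?_⟩
  ext w
  rw [hL]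
  change value w ∈ Acc ↔ _
  simp only [Set.mem_iUnion, Set.mem_inter_iff, Set.mem_ofPred_eq, Set.mem_singleton_iff]
  exact ⟨fun h => ⟨e ⟨_, h⟩, by simp [value]⟩, fun ⟨i, h1, h2⟩ => Prod.ext h1 h2 ▸ (e.symm i).2⟩

/-- every language in `nuP_{A×B}` is a finite union of intersections
`L_i^A ∩ L_i^B` with `L_i^A ∈ nuP_A` and `L_i^B ∈ nuP_B`. -/
theorem nuP_prod_decomposition {S : Sig} [Finite S.ops] (A B : AlgStr S)
    [Finite A.carrier] [Finite B.carrier]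
    (L : Set (List Bool)) (hL : L ∈ nuP (prodAlg A B)) :
    ∃ (k : ℕ) (LA : Fin k → Set (List Bool)) (LB : Fin k → Set (List Bool)),
      (∀ i, LA i ∈ nuP A) ∧ (∀ i, LB i ∈ nuP B) ∧
      L = ⋃ i, LA i ∩ LB i :=
  nuP_prod_decomposition_general A B L hL
end

section
/- Let F be a field and let w be a polynomial over F in n variables built by an ABP-process of length at most l (starting from the constant 1, and at each step either multiplying an existing polynomial by a variable or a constant, or adding several existing polynomials). Let A_1,...,A_n be affine forms in the same n variables. Then w(A_1,...,A_n) is built by an ABP-process of length O(n·l); moreover, if each A_i depends on at most one variable, the length is O(l). -/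
/-- One step of an ABP-process over coefficients `F` in `n` variables: multiply a
previously constructed polynomial (referenced by its position) by a single variable
or a single constant, or add a finite list of previously constructed polynomials. -/
inductive ABPStep (F : Type) (n : ℕ) : Type
  | mulVar : ℕ → Fin n → ABPStep F n
  | mulConst : ℕ → F → ABPStep F n
  | add : List ℕ → ABPStep F n

/-- The cost of a step: a multiplication counts 1, adding `m` polynomials counts `m`. -/
def ABPStep.cost {F : Type} {n : ℕ} : ABPStep F n → ℕ
  | .mulVar _ _ => 1
  | .mulConst _ _ => 1
  | .add js => js.length

/-- The polynomial produced by one step, given the list `v` of previously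
constructed polynomials (out-of-range references default to `0`). -/
noncomputable def ABPStep.run {F : Type} [CommSemiring F] {n : ℕ}
    (v : List (MvPolynomial (Fin n) F)) : ABPStep F n → MvPolynomial (Fin n) F
  | .mulVar j i => v.getD j 0 * MvPolynomial.X i
  | .mulConst j c => v.getD j 0 * MvPolynomial.C c
  | .add js => (js.map (fun j => v.getD j 0)).sum

/-- Run an ABP-process: starting from the single polynomial `1`, successively append
the polynomial produced by each step. -/
noncomputable def ABPRun {F : Type} [CommSemiring F] {n : ℕ} (steps : List (ABPStep F n)) :
    List (MvPolynomial (Fin n) F) :=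
  steps.foldl (fun v s => v ++ [ABPStep.run v s]) [1]

/-- `ABPSize w l`: the polynomial `w` is produced by some ABP-process of total cost
(equivalently, of ABP size) at most `l`. -/
def ABPSize {F : Type} [CommSemiring F] {n : ℕ}
    (w : MvPolynomial (Fin n) F) (l : ℕ) : Prop :=
  ∃ steps : List (ABPStep F n), (steps.map ABPStep.cost).sum ≤ l ∧ w ∈ ABPRun steps

/-!
Substitution is simulated step by step. Multiplying by a constant and adding translate verbatim,
since `bind₁ A` is an `F`-algebra map; multiplying a built polynomial `p` by `x_i` becomes
multiplying it by the affine form `A_i = ∑_{j ∈ s} α_{ij} x_j + c_i`, which an ABP-process does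
at cost `O(#s + 1)` by forming each `p x_j α_{ij}` and adding them one at a time. Here `s` is the
support of the row `α_i`: all variables in general, one variable in the special case.
-/

open MvPolynomial

variable {F : Type} {n : ℕ}

namespace ABPStep

def reindex (f : ℕ → ℕ) : ABPStep F n → ABPStep F n
  | .mulVar j i => .mulVar (f j) i
  | .mulConst j c => .mulConst (f j) c
  | .add js => .add (js.map f)

@[simp]
theorem cost_reindex (f : ℕ → ℕ) (s : ABPStep F n) : (s.reindex f).cost = s.cost := by
  cases s <;> simp [reindex, cost]

theorem run_reindex [CommSemiring F] {v v' : List (MvPolynomial (Fin n) F)} {f : ℕ → ℕ}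
    (hf : ∀ j, v'.getD (f j) 0 = v.getD j 0) (s : ABPStep F n) :
    run v' (s.reindex f) = run v s := by
  cases s <;> simp only [reindex, run, List.map_map, Function.comp_def, hf]

end ABPStep

theorem List.exists_getD_eq_of_mem_or_eq {α : Type*} {v : List α} {x d : α}
    (h : x ∈ v ∨ x = d) : ∃ j, v.getD j d = x := by
  rcases h with h | rfl
  · obtain ⟨j, hj, rfl⟩ := List.getElem_of_mem h
    exact ⟨j, List.getD_eq_getElem _ _ hj⟩
  · exact ⟨v.length, List.getD_eq_default _ _ le_rfl⟩

theorem List.getD_mem_or_eq {α : Type*} (v : List α) (j : ℕ) (d : α) :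
    v.getD j d ∈ v ∨ v.getD j d = d := by
  by_cases hj : j < v.length
  · exact .inl (List.getD_eq_getElem _ _ hj ▸ List.getElem_mem hj)
  · exact .inr (List.getD_eq_default _ _ (not_lt.mp hj))

def ABPCost (steps : List (ABPStep F n)) : ℕ := (steps.map ABPStep.cost).sum

theorem ABPCost_append (g g' : List (ABPStep F n)) :
    ABPCost (g ++ g') = ABPCost g + ABPCost g' := by simp [ABPCost]

variable [CommSemiring F]

noncomputable def ABPRunFrom (v : List (MvPolynomial (Fin n) F)) (steps : List (ABPStep F n)) :
    List (MvPolynomial (Fin n) F) :=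
  steps.foldl (fun v s => v ++ [ABPStep.run v s]) v

theorem ABPRun_eq_ABPRunFrom (steps : List (ABPStep F n)) :
    ABPRun steps = ABPRunFrom [1] steps := rfl

theorem ABPRunFrom_append (v : List (MvPolynomial (Fin n) F)) (g g' : List (ABPStep F n)) :
    ABPRunFrom v (g ++ g') = ABPRunFrom (ABPRunFrom v g) g' := List.foldl_append

theorem mem_ABPRunFrom_of_mem {v : List (MvPolynomial (Fin n) F)} (g : List (ABPStep F n))
    {p : MvPolynomial (Fin n) F} (hp : p ∈ v) : p ∈ ABPRunFrom v g := by
  induction g generalizing v with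
  | nil => exact hp
  | cons s g ih => exact ih (List.mem_append_left _ hp)

/-- Since steps refer to earlier polynomials only through their positions, a process run from
`v` can be replayed, at the same cost, from any list containing all members of `v`. -/
theorem exists_ABPRunFrom_superset {v v' : List (MvPolynomial (Fin n) F)}
    (hv : ∀ x ∈ v, x ∈ v') (g : List (ABPStep F n)) :
    ∃ g', ABPCost g' = ABPCost g ∧ ∀ x ∈ ABPRunFrom v g, x ∈ ABPRunFrom v' g' := by
  induction g generalizing v v' with
  | nil => exact ⟨[], rfl, hv⟩
  | cons s g ih =>
    choose f hf using fun j => List.exists_getD_eq_of_mem_or_eq <|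
      (List.getD_mem_or_eq v j 0).imp_left (hv _)
    have hrun := ABPStep.run_reindex hf s
    obtain ⟨g', hcost, hg'⟩ := ih (v := v ++ [s.run v]) (v' := v' ++ [(s.reindex f).run v'])
      (by rw [hrun]; simpa using fun x hx => hx.imp_left (hv x))
    exact ⟨s.reindex f :: g', by simp_all [ABPCost], hg'⟩

def ABPReachable (v : List (MvPolynomial (Fin n) F)) (q : MvPolynomial (Fin n) F) (k : ℕ) :
    Prop :=
  ∃ g : List (ABPStep F n), ABPCost g ≤ k ∧ q ∈ ABPRunFrom v g

namespace ABPReachable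

variable {v v' : List (MvPolynomial (Fin n) F)} {p q r : MvPolynomial (Fin n) F} {k m : ℕ}

theorem mono (h : ABPReachable v q k) (hk : k ≤ m) : ABPReachable v q m :=
  let ⟨g, hg, hq⟩ := h
  ⟨g, hg.trans hk, hq⟩

theorem of_superset (h : ABPReachable v q k) (hv : ∀ x ∈ v, x ∈ v') : ABPReachable v' q k :=
  let ⟨g, hg, hq⟩ := h
  let ⟨g', hcost, hg'⟩ := exists_ABPRunFrom_superset hv g
  ⟨g', hcost ▸ hg, hg' q hq⟩

theorem trans (h : ABPReachable v q k) (h' : ABPReachable (q :: v) r m) :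
    ABPReachable v r (k + m) := by
  obtain ⟨g, hg, hq⟩ := h
  obtain ⟨g', hg', hr⟩ := h'.of_superset (v' := ABPRunFrom v g) <| by
    simpa using ⟨hq, fun x hx => mem_ABPRunFrom_of_mem g hx⟩
  exact ⟨g ++ g', by rw [ABPCost_append]; omega, by rwa [ABPRunFrom_append]⟩

theorem of_run (v : List (MvPolynomial (Fin n) F)) (s : ABPStep F n) :
    ABPReachable v (s.run v) s.cost :=
  ⟨[s], by simp [ABPCost], by simp [ABPRunFrom]⟩

theorem mul_X (hp : p ∈ v) (i : Fin n) : ABPReachable v (p * X i) 1 := by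
  obtain ⟨j, rfl⟩ := List.exists_getD_eq_of_mem_or_eq (d := 0) (.inl hp)
  exact of_run v (.mulVar j i)

theorem mul_C (hp : p ∈ v) (c : F) : ABPReachable v (p * C c) 1 := by
  obtain ⟨j, rfl⟩ := List.exists_getD_eq_of_mem_or_eq (d := 0) (.inl hp)
  exact of_run v (.mulConst j c)

theorem list_sum {ps : List (MvPolynomial (Fin n) F)} (hps : ∀ p ∈ ps, p ∈ v) :
    ABPReachable v ps.sum ps.length := by
  choose f hf using fun p hp => List.exists_getD_eq_of_mem_or_eq (d := 0) (.inl (hps p hp))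
  have hmap : (ps.attach.map fun p => f p.1 p.2).map (v.getD · 0) = ps := by
    simp only [List.map_map, Function.comp_def, hf, List.map_subtype, List.unattach_attach,
      List.map_id']
  simpa only [ABPStep.run, ABPStep.cost, hmap, List.length_map, List.length_attach] using
    of_run v (.add (ps.attach.map fun p => f p.1 p.2))

theorem zero (v : List (MvPolynomial (Fin n) F)) : ABPReachable v 0 0 :=
  of_run v (.add [])

theorem add (hq : ABPReachable v q k) (hr : ABPReachable v r m) :
    ABPReachable v (q + r) (k + m + 2) := by
  have hsum : ABPReachable (r :: q :: v) (q + r) 2 := by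
    simpa using list_sum (ps := [q, r]) (v := r :: q :: v) (by simp)
  rw [add_assoc]
  exact hq.trans ((hr.of_superset fun x hx => List.mem_cons_of_mem q hx).trans hsum)

theorem mul_affine (hp : p ∈ v) (s : Finset (Fin n)) (a : Fin n → F) (c : F) :
    ABPReachable v (p * (∑ j ∈ s, C (a j) * X j + C c)) (4 * s.card + 1) := by
  classical
  induction s using Finset.induction_on with
  | empty => simpa using mul_C hp c
  | insert j s hj ih =>
    have hterm : ABPReachable v (p * X j * C (a j)) 2 :=
      (mul_X hp j).trans (mul_C List.mem_cons_self _)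
    have hsplit : p * (∑ i ∈ insert j s, C (a i) * X i + C c) =
        p * X j * C (a j) + p * (∑ i ∈ s, C (a i) * X i + C c) := by
      rw [Finset.sum_insert hj]; ring
    rw [hsplit, Finset.card_insert_of_notMem hj]
    exact (hterm.add ih).mono (by omega)

end ABPReachable

theorem ABPSize.mono {w : MvPolynomial (Fin n) F} {l l' : ℕ} (hw : ABPSize w l) (hl : l ≤ l') :
    ABPSize w l' :=
  let ⟨steps, hcost, hmem⟩ := hw
  ⟨steps, hcost.trans hl, hmem⟩

section Substitution

variable {A : Fin n → MvPolynomial (Fin n) F} {K : ℕ}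

theorem ABPReachable.bind₁_run (hK : 1 ≤ K)
    (hA : ∀ i (V : List (MvPolynomial (Fin n) F)) p, p ∈ V → ABPReachable V (p * A i) K)
    {v V : List (MvPolynomial (Fin n) F)} (hv : ∀ x ∈ v, bind₁ A x ∈ V) (s : ABPStep F n) :
    ABPReachable V (bind₁ A (s.run v)) (K * s.cost) := by
  -- out-of-range references read `0`, so `0` is built first (at no cost, as an empty sum)
  have href : ∀ j, bind₁ A (v.getD j 0) ∈ 0 :: V := fun j => by
    rcases List.getD_mem_or_eq v j 0 with h | h
    · exact List.mem_cons_of_mem _ (hv _ h)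
    · rw [h, map_zero]; exact List.mem_cons_self
  rw [← zero_add (K * s.cost)]
  refine (ABPReachable.zero V).trans ?_
  cases s with
  | mulVar j i =>
    simpa only [ABPStep.run, ABPStep.cost, map_mul, bind₁_X_right, mul_one] using
      hA i _ _ (href j)
  | mulConst j c =>
    simpa only [ABPStep.run, ABPStep.cost, map_mul, bind₁_C_right, mul_one] using
      (ABPReachable.mul_C (href j) c).mono hK
  | add js =>
    simp only [ABPStep.run, ABPStep.cost, map_list_sum, List.map_map]
    refine (ABPReachable.list_sum ?_).mono ?_
    · simpa using fun j _ => href j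
    · simpa using Nat.le_mul_of_pos_left _ hK

theorem exists_ABPRunFrom_bind₁ (hK : 1 ≤ K)
    (hA : ∀ i (V : List (MvPolynomial (Fin n) F)) p, p ∈ V → ABPReachable V (p * A i) K)
    (steps : List (ABPStep F n)) :
    ∃ g, ABPCost g ≤ K * ABPCost steps ∧
      ∀ p ∈ ABPRun steps, bind₁ A p ∈ ABPRunFrom [1] g := by
  induction steps using List.reverseRecOn with
  | nil => exact ⟨[], by simp [ABPCost], by simp [ABPRun, ABPRunFrom]⟩
  | append_singleton steps s ih =>
    obtain ⟨g, hg, hmem⟩ := ih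
    obtain ⟨g', hg', hnew⟩ := ABPReachable.bind₁_run hK hA hmem s
    refine ⟨g ++ g', ?_, ?_⟩
    · have hs : ABPCost [s] = s.cost := by simp [ABPCost]
      rw [ABPCost_append, ABPCost_append, hs, mul_add]
      omega
    · rw [ABPRun_eq_ABPRunFrom, ABPRunFrom_append, ABPRunFrom_append, ← ABPRun_eq_ABPRunFrom]
      simp only [ABPRunFrom, List.foldl_cons, List.foldl_nil, List.mem_append, List.mem_singleton]
      rintro p (hp | rfl)
      · exact mem_ABPRunFrom_of_mem g' (hmem p hp)
      · exact hnew

theorem ABPSize.bind₁ (hK : 1 ≤ K)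
    (hA : ∀ i (V : List (MvPolynomial (Fin n) F)) p, p ∈ V → ABPReachable V (p * A i) K)
    {w : MvPolynomial (Fin n) F} {l : ℕ} (hw : ABPSize w l) : ABPSize (bind₁ A w) (K * l) :=
  let ⟨steps, hcost, hmem⟩ := hw
  let ⟨g, hg, hg'⟩ := exists_ABPRunFrom_bind₁ hK hA steps
  ⟨g, hg.trans (Nat.mul_le_mul_left K hcost), hg' w hmem⟩

end Substitution

/-- substituting affine forms `A_i = Σ_j α_{ij} x_j + c_i` into a
polynomial `w` of ABP complexity `l` yields a polynomial of ABP complexity `O(n·l)`;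
if moreover each affine form depends on at most one variable, of ABP complexity `O(l)`. -/
theorem abp_affine_substitution :
    ∃ C : ℕ, ∀ (F : Type) [Field F] (n l : ℕ)
      (w : MvPolynomial (Fin n) F) (α : Fin n → Fin n → F) (c : Fin n → F),
      ABPSize w l →
      (ABPSize (MvPolynomial.bind₁
          (fun i => (∑ j : Fin n, MvPolynomial.C (α i j) * MvPolynomial.X j)
            + MvPolynomial.C (c i)) w)
        (C * (n + 1) * (l + 1)) ∧
       ((∀ i, ∃ j : Fin n, ∀ j' : Fin n, j' ≠ j → α i j' = 0) →
        ABPSize (MvPolynomial.bind₁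
          (fun i => (∑ j : Fin n, MvPolynomial.C (α i j) * MvPolynomial.X j)
            + MvPolynomial.C (c i)) w)
        (C * (l + 1)))) := by
  refine ⟨5, fun F _ n l w α c hw => ⟨?_, fun hsupp => ?_⟩⟩
  · refine (hw.bind₁ (K := 4 * n + 1) (by omega) fun i V p hp => ?_).mono (by nlinarith)
    simpa using ABPReachable.mul_affine hp Finset.univ (α i) (c i)
  · choose j hj using hsupp
    refine (hw.bind₁ (K := 5) (by omega) fun i V p hp => ?_).mono (by omega)
    have hrow : ∑ j' ∈ {j i}, C (α i j') * X j' = ∑ j', C (α i j') * X j' :=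
      Finset.sum_subset (Finset.subset_univ _) fun j' _ hj' => by
        rw [hj i j' (by simpa using hj'), map_zero, zero_mul]
    simpa [hrow] using ABPReachable.mul_affine hp {j i} (α i) (c i)
end
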